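/- arXiv:1012.5425 — 4 statements merged into one kernel-verified Lean document; each statement's English description precedes it below -/
import Mathlib

section
/- If p and p' are TRP pairs with sig(p) = sig(p'), then p ∼ p', and consequently lm(p) = lm(p'), i.e., p and p' are equivalent. -/
namespace TRB

open MvPolynomial
open scoped Classical

/-- Monomials in the variables `x₁, …, xₙ`, identified with their exponent vectors;
a monomial `m₁` divides `m₂` iff the exponent vector of `m₁` is componentwise `≤`. -/
abbrev Mon (n : ℕ) := Fin n →₀ ℕ

/-- Module monomials (signatures) `x^α E_i` of the free module `P^d`. -/
abbrev Sig (n d : ℕ) := Mon n × Fin d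

/-- The action of a monomial on a module monomial: `m • (x^α E_i) = (m x^α) E_i`. -/
noncomputable def Sig.smul {n d : ℕ} (m : Mon n) (s : Sig n d) : Sig n d := (m + s.1, s.2)

/-- An admissible monomial order on the monomials of `P = K[x₁,…,xₙ]`:
a (strict) linear order such that `1 ⪯ m` for every monomial `m`, and
multiplication by a monomial is strictly monotone. -/
structure MonOrder (n : ℕ) where
  lt : Mon n → Mon n → Prop
  irrefl : ∀ a, ¬ lt a a
  trans : ∀ a b c, lt a b → lt b c → lt a c
  total : ∀ a b, lt a b ∨ a = b ∨ lt b a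
  zero_lt : ∀ a, a ≠ 0 → lt 0 a
  mul_lt_mul : ∀ (m a b : Mon n), lt a b → lt (m + a) (m + b)

/-- An admissible signature order on module monomials:
a (strict) linear order with `s ⪯ m • s` for every monomial `m`, and such that
multiplication by a monomial is strictly monotone. -/
structure SigOrder (n d : ℕ) where
  lt : Sig n d → Sig n d → Prop
  irrefl : ∀ s, ¬ lt s s
  trans : ∀ s t r, lt s t → lt t r → lt s r
  total : ∀ s t, lt s t ∨ s = t ∨ lt t s
  le_smul : ∀ (m : Mon n) (s : Sig n d), s = Sig.smul m s ∨ lt s (Sig.smul m s)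
  smul_lt_smul : ∀ (m : Mon n) (s t : Sig n d), lt s t → lt (Sig.smul m s) (Sig.smul m t)

/-- Non-strict version of a monomial order. -/
def MonOrder.le {n : ℕ} (mo : MonOrder n) (a b : Mon n) : Prop := mo.lt a b ∨ a = b

/-- Non-strict version of a signature order. -/
def SigOrder.le {n d : ℕ} (so : SigOrder n d) (s t : Sig n d) : Prop := so.lt s t ∨ s = t

/-- The `≺_m`-leading monomial of a polynomial (junk value `0` on the zero polynomial). -/
noncomputable def MonOrder.lm {n : ℕ} {K : Type*} [CommSemiring K] (mo : MonOrder n)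
    (v : MvPolynomial (Fin n) K) : Mon n :=
  if h : ∃ m ∈ v.support, ∀ m' ∈ v.support, m' ≠ m → mo.lt m' m then h.choose else 0

/-- The signature of a module element `u ∈ P^d`: the `≺_s`-largest module monomial
`x^α E_i` whose coefficient in `u` is nonzero (junk value on `u = 0`). -/
noncomputable def SigOrder.sig {n d : ℕ} [NeZero d] {K : Type*} [CommSemiring K]
    (so : SigOrder n d) (u : Fin d → MvPolynomial (Fin n) K) : Sig n d :=
  if h : ∃ s : Sig n d, (u s.2).coeff s.1 ≠ 0 ∧
      ∀ t : Sig n d, (u t.2).coeff t.1 ≠ 0 → t ≠ s → so.lt t s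
  then h.choose else (0, ⟨0, Nat.pos_of_ne_zero (NeZero.ne d)⟩)

/-- The ambient type of candidate pairs `(u, v) ∈ P^d × P`. -/
abbrev PairT (K : Type*) [CommSemiring K] (n d : ℕ) :=
  (Fin d → MvPolynomial (Fin n) K) × MvPolynomial (Fin n) K

variable {K : Type*} [Field K] {n d : ℕ}

/-- `(u, v)` is a pair (w.r.t. the input `f`) if `u ⬝ f = Σ_i u_i f_i = v`. -/
def IsPair (f : Fin d → MvPolynomial (Fin n) K) (p : PairT K n d) : Prop :=
  ∑ i, p.1 i * f i = p.2

/-- Leading monomial of a pair: `lm p = lm v`. -/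
noncomputable def lmP (mo : MonOrder n) (p : PairT K n d) : Mon n := mo.lm p.2

/-- Signature of a pair: `sig p = sig u`. -/
noncomputable def sigP [NeZero d] (so : SigOrder n d) (p : PairT K n d) : Sig n d :=
  so.sig p.1

/-- The pair order: `p ≺_p q` iff `lm(p)·sig(q) ≺_s lm(q)·sig(p)`. -/
def PairLt [NeZero d] (mo : MonOrder n) (so : SigOrder n d) (p q : PairT K n d) : Prop :=
  so.lt (Sig.smul (lmP mo p) (sigP so q)) (Sig.smul (lmP mo q) (sigP so p))

/-- Pairs are similar if `lm(p)·sig(q) = lm(q)·sig(p)`. -/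
def Similar [NeZero d] (mo : MonOrder n) (so : SigOrder n d) (p q : PairT K n d) : Prop :=
  Sig.smul (lmP mo p) (sigP so q) = Sig.smul (lmP mo q) (sigP so p)

/-- `p ⪯_p q`. -/
def PairLE [NeZero d] (mo : MonOrder n) (so : SigOrder n d) (p q : PairT K n d) : Prop :=
  PairLt mo so p q ∨ Similar mo so p q

/-- Pairs are equivalent if they have the same signature and the same leading monomial. -/
def Equivalent [NeZero d] (mo : MonOrder n) (so : SigOrder n d) (p q : PairT K n d) : Prop :=
  sigP so p = sigP so q ∧ lmP mo p = lmP mo q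

/-- `p` is top reducible by `q`: both non-syzygy, `p ≺_p q` and `lm(q) ∣ lm(p)`. -/
def TopRed [NeZero d] (mo : MonOrder n) (so : SigOrder n d) (p q : PairT K n d) : Prop :=
  p.2 ≠ 0 ∧ q.2 ≠ 0 ∧ PairLt mo so p q ∧ lmP mo q ≤ lmP mo p

/-- A TRP pair: a non-syzygy pair that is top reducible by no pair. -/
def IsTRP [NeZero d] (f : Fin d → MvPolynomial (Fin n) K) (mo : MonOrder n)
    (so : SigOrder n d) (p : PairT K n d) : Prop :=
  IsPair f p ∧ p.2 ≠ 0 ∧ ∀ q : PairT K n d, IsPair f q → ¬ TopRed mo so p q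

/-- Divisibility of signatures: `x^α E_i ∣ x^β E_j` iff `i = j` and `x^α ∣ x^β`. -/
def SigDvd {n d : ℕ} (s t : Sig n d) : Prop := s.2 = t.2 ∧ s.1 ≤ t.1

/-- A TRB pair: a TRP pair `p` such that no TRP pair similar to `p` has signature
properly dividing `sig p`. -/
def IsTRB [NeZero d] (f : Fin d → MvPolynomial (Fin n) K) (mo : MonOrder n)
    (so : SigOrder n d) (p : PairT K n d) : Prop :=
  IsTRP f mo so p ∧ ∀ q : PairT K n d, IsTRP f mo so q → Similar mo so p q →
    SigDvd (sigP so q) (sigP so p) → sigP so q = sigP so p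

/-- A signature is syzygy if it is the signature of a syzygy pair `(u, 0)`, `u ≠ 0`. -/
def IsSyzygySig [NeZero d] (f : Fin d → MvPolynomial (Fin n) K) (so : SigOrder n d)
    (s : Sig n d) : Prop :=
  ∃ u : Fin d → MvPolynomial (Fin n) K, u ≠ 0 ∧ IsPair f (u, 0) ∧ so.sig u = s

/-- The sub-order `≺_{s,i}` on monomials: `x^α ≺_{s,i} x^β` iff `x^α E_i ≺_s x^β E_i`. -/
def SubOrder {n d : ℕ} (so : SigOrder n d) (i : Fin d) (a b : Mon n) : Prop :=
  so.lt (a, i) (b, i)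

/-- The sub-order `≺_{s,i}` coincides with `≺_m`. -/
def EqOrders {n d : ℕ} (so : SigOrder n d) (mo : MonOrder n) (i : Fin d) : Prop :=
  ∀ a b : Mon n, SubOrder so i a b ↔ mo.lt a b

/-- `≺_m` and `≺_s` are almost compatible: either every sub-order `≺_{s,i}` coincides
with `≺_m`, or there is exactly one index `k` with `≺_{s,k} ≠ ≺_m`, and this `k`
satisfies `x^α E_k ≺_s E_i` for every monomial `x^α` and every index `i ≠ k`. -/
def AlmostCompatible {n d : ℕ} (mo : MonOrder n) (so : SigOrder n d) : Prop :=
  (∀ i, EqOrders so mo i) ∨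
  (∃ k, ¬ EqOrders so mo k ∧ (∀ i, i ≠ k → EqOrders so mo i) ∧
    ∀ (a : Mon n) (i : Fin d), i ≠ k → so.lt (a, k) ((0 : Mon n), i))

/-- `≺_m` and `≺_s` are compatible: `s₁ ⪯_s s₂` and `m₁ ⪯_m m₂` imply
`m₁·s₁ ⪯_s m₂·s₂`, with equality only when `s₁ = s₂` and `m₁ = m₂`. -/
def Compatible {n d : ℕ} (mo : MonOrder n) (so : SigOrder n d) : Prop :=
  ∀ (s₁ s₂ : Sig n d) (m₁ m₂ : Mon n), so.le s₁ s₂ → mo.le m₁ m₂ →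
    so.le (Sig.smul m₁ s₁) (Sig.smul m₂ s₂) ∧
    (Sig.smul m₁ s₁ = Sig.smul m₂ s₂ → s₁ = s₂ ∧ m₁ = m₂)

/-- The multiplied pair `m·p = (X^m · u, X^m · v)`. -/
noncomputable def mulPair (m : Mon n) (p : PairT K n d) : PairT K n d :=
  (fun i => monomial m (1 : K) * p.1 i, monomial m (1 : K) * p.2)

/-- `[m, p]` is the J-pair of the non-similar non-syzygy pairs `p₁, p₂`:
`p` is the `≺_p`-smaller of the two and `m·lm(p) = lcm(lm p₁, lm p₂)`. -/
def IsJPair [NeZero d] (mo : MonOrder n) (so : SigOrder n d) (p₁ p₂ : PairT K n d)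
    (m : Mon n) (p : PairT K n d) : Prop :=
  p₁.2 ≠ 0 ∧ p₂.2 ≠ 0 ∧ ¬ Similar mo so p₁ p₂ ∧
  ((PairLt mo so p₁ p₂ ∧ p = p₁) ∨ (PairLt mo so p₂ p₁ ∧ p = p₂)) ∧
  m + lmP mo p = lmP mo p₁ ⊔ lmP mo p₂

/-- `G` is a Gröbner basis of the ideal `⟨f₁,…,f_d⟩` w.r.t. `≺_m`: `G` consists of
elements of the ideal, and for every nonzero `v` in the ideal there is a nonzero
`g ∈ G` with `lm g ∣ lm v`. -/
def IsGroebnerBasis (mo : MonOrder n) (f : Fin d → MvPolynomial (Fin n) K)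
    (G : Set (MvPolynomial (Fin n) K)) : Prop :=
  (∀ g ∈ G, g ∈ Ideal.span (Set.range f)) ∧
  ∀ v ∈ Ideal.span (Set.range f), v ≠ 0 →
    ∃ g ∈ G, g ≠ 0 ∧ mo.lm g ≤ mo.lm v


/- Proof idea: if `sig p = sig p'` but `lm p' ≺ lm p`, subtract from `p` the multiple of `p'`
that cancels the leading term of the module part. The result `q` is a pair with
`lm q = lm p` and `sig q ≺ sig p`, so `p ≺_p q` and `q` top reduces `p`. -/

theorem exists_greatest_of_isStrictTotalOrder {α : Type*} (r : α → α → Prop)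
    [IsStrictTotalOrder α r] {S : Finset α} (hS : S.Nonempty) :
    ∃ m ∈ S, ∀ x ∈ S, x ≠ m → r x m := by
  classical
  let := linearOrderOfSTO r
  obtain ⟨m, hm, hmax⟩ := S.exists_max_image id hS
  exact ⟨m, hm, fun x hx hxm => (hmax x hx).resolve_left hxm⟩

section Orders

variable {n d : ℕ}

instance (mo : MonOrder n) : IsStrictTotalOrder (Mon n) mo.lt where
  irrefl := mo.irrefl
  trans := mo.trans
  trichotomous a b hab hba := by simpa [hab, hba] using mo.total a b

instance (so : SigOrder n d) : IsStrictTotalOrder (Sig n d) so.lt where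
  irrefl := so.irrefl
  trans := so.trans
  trichotomous s t hst hts := by simpa [hst, hts] using so.total s t

theorem MonOrder.lt_of_le_of_lt (mo : MonOrder n) {a b c : Mon n} (hab : mo.le a b)
    (hbc : mo.lt b c) : mo.lt a c := by
  rcases hab with hab | rfl
  exacts [mo.trans _ _ _ hab hbc, hbc]

theorem MonOrder.eq_of_le_of_le (mo : MonOrder n) {a b : Mon n} (hab : mo.le a b)
    (hba : mo.le b a) : a = b := by
  rcases hab with hab | rfl
  · rcases hba with hba | rfl
    exacts [(mo.irrefl _ (mo.trans _ _ _ hab hba)).elim, rfl]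
  · rfl

end Orders

section LeadingMonomial

variable {n : ℕ} {R : Type*} [CommSemiring R] (mo : MonOrder n) {v : MvPolynomial (Fin n) R}

theorem MonOrder.lm_spec (hv : v ≠ 0) :
    mo.lm v ∈ v.support ∧ ∀ m ∈ v.support, m ≠ mo.lm v → mo.lt m (mo.lm v) := by
  have hex := exists_greatest_of_isStrictTotalOrder mo.lt (support_nonempty.2 hv)
  rw [MonOrder.lm, dif_pos hex]
  exact hex.choose_spec

theorem MonOrder.le_lm {m : Mon n} (hm : m ∈ v.support) : mo.le m (mo.lm v) := by
  have hv : v ≠ 0 := by rintro rfl; simp at hm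
  by_cases h : m = mo.lm v
  exacts [Or.inr h, Or.inl ((mo.lm_spec hv).2 m hm h)]

theorem MonOrder.lm_eq_of_le {L : Mon n} (hL : L ∈ v.support)
    (hle : ∀ m ∈ v.support, mo.le m L) : mo.lm v = L :=
  mo.eq_of_le_of_le (hle _ ((mo.lm_spec (ne_zero_iff.2 ⟨L, mem_support_iff.1 hL⟩)).1))
    (mo.le_lm hL)

end LeadingMonomial

theorem MonOrder.lm_sub_smul_of_lt {n : ℕ} {K : Type*} [Field K] (mo : MonOrder n)
    {v w : MvPolynomial (Fin n) K} (c : K) (hv : v ≠ 0) (hlt : mo.lt (mo.lm w) (mo.lm v)) :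
    v - c • w ≠ 0 ∧ mo.lm (v - c • w) = mo.lm v := by
  set L := mo.lm v
  have hwL : w.coeff L = 0 :=
    notMem_support_iff.1 fun hL => mo.irrefl _ (mo.lt_of_le_of_lt (mo.le_lm hL) hlt)
  have hL : L ∈ (v - c • w).support := by
    simpa [hwL] using (mo.lm_spec hv).1
  refine ⟨ne_zero_iff.2 ⟨L, mem_support_iff.1 hL⟩, mo.lm_eq_of_le hL fun m hm => ?_⟩
  have hm' : v.coeff m ≠ 0 ∨ w.coeff m ≠ 0 := by
    by_contra! h
    simp [h] at hm
  rcases hm' with hm' | hm'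
  · exact mo.le_lm (mem_support_iff.2 hm')
  · exact Or.inl (mo.lt_of_le_of_lt (mo.le_lm (mem_support_iff.2 hm')) hlt)

section Signature

variable {n d : ℕ} {R : Type*} [CommSemiring R] {u : Fin d → MvPolynomial (Fin n) R}

theorem exists_coeff_ne_zero_of_ne_zero (hu : u ≠ 0) :
    ∃ t : Sig n d, (u t.2).coeff t.1 ≠ 0 := by
  by_contra! h
  exact hu (funext fun i => MvPolynomial.ext _ _ fun m => h (m, i))

variable [NeZero d] (so : SigOrder n d)

theorem SigOrder.sig_spec (hu : u ≠ 0) :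
    (u (so.sig u).2).coeff (so.sig u).1 ≠ 0 ∧
      ∀ t : Sig n d, (u t.2).coeff t.1 ≠ 0 → t ≠ so.sig u → so.lt t (so.sig u) := by
  classical
  let S : Finset (Sig n d) := Finset.univ.biUnion fun i => (u i).support.image fun m => (m, i)
  have hS : ∀ t : Sig n d, t ∈ S ↔ (u t.2).coeff t.1 ≠ 0 := by
    rintro ⟨m, i⟩
    simp [S, Prod.ext_iff]
  obtain ⟨t₀, ht₀⟩ := exists_coeff_ne_zero_of_ne_zero hu
  obtain ⟨s, hs, hmax⟩ :=
    exists_greatest_of_isStrictTotalOrder so.lt ⟨t₀, (hS t₀).2 ht₀⟩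
  have hex : ∃ s : Sig n d, (u s.2).coeff s.1 ≠ 0 ∧
      ∀ t : Sig n d, (u t.2).coeff t.1 ≠ 0 → t ≠ s → so.lt t s :=
    ⟨s, (hS s).1 hs, fun t ht => hmax t ((hS t).2 ht)⟩
  rw [SigOrder.sig, dif_pos hex]
  exact hex.choose_spec

theorem SigOrder.le_sig {t : Sig n d} (ht : (u t.2).coeff t.1 ≠ 0) : so.le t (so.sig u) := by
  have hu : u ≠ 0 := by rintro rfl; simp at ht
  by_cases h : t = so.sig u
  exacts [Or.inr h, Or.inl ((so.sig_spec hu).2 t ht h)]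

end Signature

theorem SigOrder.sig_sub_smul_lt {n d : ℕ} [NeZero d] {K : Type*} [Field K] (so : SigOrder n d)
    {u u' : Fin d → MvPolynomial (Fin n) K} {c : K} (h : so.sig u = so.sig u')
    (hc : (u (so.sig u).2).coeff (so.sig u).1 = c * (u' (so.sig u).2).coeff (so.sig u).1)
    (hw : u - c • u' ≠ 0) :
    so.lt (so.sig (u - c • u')) (so.sig u) := by
  set t := so.sig (u - c • u')
  have ht : ((u - c • u') t.2).coeff t.1 ≠ 0 := (so.sig_spec hw).1
  have hts : t ≠ so.sig u := by
    intro hts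
    rw [hts] at ht
    simp [coeff_smul, hc] at ht
  have hle : so.le t (so.sig u) := by
    have h' : (u t.2).coeff t.1 ≠ 0 ∨ (u' t.2).coeff t.1 ≠ 0 := by
      by_contra! h0
      simp [h0] at ht
    rcases h' with h' | h'
    exacts [so.le_sig h', h ▸ so.le_sig h']
  exact hle.resolve_right hts

section Pairs

variable {K : Type*} [Field K] {n d : ℕ} {f : Fin d → MvPolynomial (Fin n) K}
  {p p' : PairT K n d}

theorem IsPair.sub_smul (hp : IsPair f p) (hp' : IsPair f p') (c : K) :
    IsPair f (p - c • p') := by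
  simp only [IsPair, Prod.fst_sub, Prod.snd_sub, Prod.smul_fst, Prod.smul_snd, Pi.sub_apply,
    Pi.smul_apply, sub_mul, smul_mul_assoc, Finset.sum_sub_distrib, ← Finset.smul_sum]
  rw [hp, hp']

theorem IsPair.fst_ne_zero (hp : IsPair f p) (hv : p.2 ≠ 0) : p.1 ≠ 0 := by
  intro h
  rw [← hp] at hv
  simp [h] at hv

theorem IsTRP.not_lt_lmP_of_sigP_eq [NeZero d] {mo : MonOrder n} {so : SigOrder n d}
    (hp : IsTRP f mo so p) (hp' : IsPair f p') (hu' : p'.1 ≠ 0) (h : sigP so p = sigP so p') :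
    ¬ mo.lt (lmP mo p') (lmP mo p) := by
  intro hlt
  obtain ⟨hpair, hv, hirred⟩ := hp
  set s := so.sig p.1
  have ha' : (p'.1 s.2).coeff s.1 ≠ 0 := (show so.sig p'.1 = s from h.symm) ▸ (so.sig_spec hu').1
  set c := (p.1 s.2).coeff s.1 / (p'.1 s.2).coeff s.1
  have hq : IsPair f (p - c • p') := hpair.sub_smul hp' c
  obtain ⟨hqv, hlmq⟩ := mo.lm_sub_smul_of_lt c hv hlt
  have hsig : so.lt (sigP so (p - c • p')) (sigP so p) :=
    so.sig_sub_smul_lt h (div_mul_cancel₀ _ ha').symm (hq.fst_ne_zero hqv)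
  refine hirred _ hq ⟨hv, hqv, ?_, hlmq.le⟩
  unfold PairLt
  rw [lmP, lmP, Prod.snd_sub, Prod.smul_snd, hlmq]
  exact so.smul_lt_smul _ _ _ hsig

end Pairs

/-- If `p` and `p'` are TRP pairs with `sig p = sig p'`, then `p ∼ p'`,
and consequently `lm p = lm p'`, i.e., `p` and `p'` are equivalent. -/
theorem TRP_same_sig_similar {K : Type*} [Field K] {n d : ℕ} [NeZero d]
    (mo : MonOrder n) (so : SigOrder n d) (f : Fin d → MvPolynomial (Fin n) K)
    (p p' : PairT K n d) (hp : IsTRP f mo so p) (hp' : IsTRP f mo so p')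
    (h : sigP so p = sigP so p') :
    Similar mo so p p' ∧ lmP mo p = lmP mo p' := by
  have hlm : lmP mo p = lmP mo p' := by
    rcases mo.total (lmP mo p) (lmP mo p') with hlt | heq | hlt
    · exact (hp'.not_lt_lmP_of_sigP_eq hp.1 (hp.1.fst_ne_zero hp.2.1) h.symm hlt).elim
    · exact heq
    · exact (hp.not_lt_lmP_of_sigP_eq hp'.1 (hp'.1.fst_ne_zero hp'.2.1) h hlt).elim
  exact ⟨by rw [Similar, h, hlm], hlm⟩

end TRB
end

section
/- Every pair that is top reducible by some pair is top reducible by some TRB pair. -/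
namespace TRB

open MvPolynomial
open scoped Classical

variable {K : Type*} [Field K] {n d : ℕ}

/-!
Among the pairs that top reduce `p`, take one, `q`, minimizing `lm(q)·sig(q)`. It is TRP: a pair
`r` reducing `q` would also reduce `p`, and `lm(r) ∣ lm(q)` together with `q ≺_p r` gives
`lm(r)·sig(r) ≺_s lm(q)·sig(q)`. Next, among the TRP pairs similar to `q` whose signature divides
`sig(q)`, take one, `q'`, of minimal signature; minimality makes it TRB. Similarity and
`sig(q') ∣ sig(q)` force `lm(q') ∣ lm(q)`, so `q'` still top reduces `p`. Both minima exist since an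
admissible signature order extends signature divisibility, a well-quasi-order by Dickson's lemma.
-/

namespace Sig

lemma smul_smul (a b : Mon n) (s : Sig n d) :
    Sig.smul a (Sig.smul b s) = Sig.smul (a + b) s := by
  simp [Sig.smul, add_assoc]

lemma smul_comm (a b : Mon n) (s : Sig n d) :
    Sig.smul a (Sig.smul b s) = Sig.smul b (Sig.smul a s) := by
  rw [smul_smul, smul_smul, add_comm]

lemma smul_injective (m : Mon n) : Function.Injective (Sig.smul (d := d) m) := by
  intro s t h
  simp only [Sig.smul, Prod.mk.injEq, add_right_inj] at h
  exact Prod.ext h.1 h.2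

lemma smul_tsub_of_sigDvd {s t : Sig n d} (h : SigDvd s t) : Sig.smul (t.1 - s.1) s = t := by
  simp [Sig.smul, tsub_add_cancel_of_le h.2, h.1]

end Sig

lemma SigDvd.trans {s t u : Sig n d} (hst : SigDvd s t) (htu : SigDvd t u) : SigDvd s u :=
  ⟨hst.1.trans htu.1, hst.2.trans htu.2⟩

lemma wellQuasiOrdered_sigDvd : WellQuasiOrdered (SigDvd : Sig n d → Sig n d → Prop) := by
  intro g
  obtain ⟨i, j, hij, hle, heq⟩ :=
    (wellQuasiOrdered_le (α := Mon n)).prod (Finite.wellQuasiOrdered (α := Fin d) Eq) g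
  exact ⟨i, j, hij, heq, hle⟩

namespace SigOrder

variable (so : SigOrder n d) {s t u : Sig n d}

lemma lt_asymm (h : so.lt s t) : ¬ so.lt t s :=
  fun h' => so.irrefl s (so.trans _ _ _ h h')

lemma not_lt_of_le (h : so.le s t) : ¬ so.lt t s := by
  rcases h with h | rfl
  exacts [so.lt_asymm h, so.irrefl s]

lemma lt_of_le_of_lt (hst : so.le s t) (htu : so.lt t u) : so.lt s u := by
  rcases hst with hst | rfl
  exacts [so.trans _ _ _ hst htu, htu]

lemma lt_of_lt_of_le (hst : so.lt s t) (htu : so.le t u) : so.lt s u := by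
  rcases htu with htu | rfl
  exacts [so.trans _ _ _ hst htu, hst]

lemma self_le_smul (m : Mon n) (s : Sig n d) : so.le s (Sig.smul m s) :=
  (so.le_smul m s).symm

lemma smul_le_smul_of_le {a b : Mon n} (h : a ≤ b) (s : Sig n d) :
    so.le (Sig.smul a s) (Sig.smul b s) := by
  have : Sig.smul (b - a) (Sig.smul a s) = Sig.smul b s := by
    rw [Sig.smul_smul, tsub_add_cancel_of_le h]
  exact this ▸ so.self_le_smul _ _

lemma le_of_sigDvd (h : SigDvd s t) : so.le s t :=
  Sig.smul_tsub_of_sigDvd h ▸ so.self_le_smul _ s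

lemma lt_of_sigDvd_of_ne (h : SigDvd s t) (hne : s ≠ t) : so.lt s t :=
  (so.le_of_sigDvd h).resolve_right hne

lemma lt_of_smul_lt_smul {m : Mon n} (h : so.lt (Sig.smul m s) (Sig.smul m t)) : so.lt s t := by
  rcases so.total s t with hst | rfl | hts
  · exact hst
  · exact absurd h (so.irrefl _)
  · exact absurd (so.smul_lt_smul m _ _ hts) (so.lt_asymm h)

theorem wellFounded : WellFounded so.lt := by
  have : IsStrictOrder (Sig n d) so.lt := { irrefl := so.irrefl, trans := so.trans }
  refine RelEmbedding.wellFounded_iff_isEmpty.2 ⟨fun e => ?_⟩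
  obtain ⟨i, j, hij, hdvd⟩ := wellQuasiOrdered_sigDvd e
  exact so.not_lt_of_le (so.le_of_sigDvd hdvd) (e.map_rel_iff.2 hij)

end SigOrder

section Pairs

variable [NeZero d] {mo : MonOrder n} {so : SigOrder n d} {p q q' r : PairT K n d}

lemma PairLt.trans (hpq : PairLt mo so p q) (hqr : PairLt mo so q r) : PairLt mo so p r := by
  unfold PairLt at *
  apply so.lt_of_smul_lt_smul (m := lmP mo q)
  have h₁ := so.smul_lt_smul (lmP mo r) _ _ hpq
  have h₂ := so.smul_lt_smul (lmP mo p) _ _ hqr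
  rw [Sig.smul_comm (lmP mo q) (lmP mo p), Sig.smul_comm (lmP mo q) (lmP mo r)]
  rw [Sig.smul_comm (lmP mo p) (lmP mo r)] at h₂
  exact so.trans _ _ _ h₂ h₁

lemma PairLt.trans_similar (hpq : PairLt mo so p q) (hsim : Similar mo so q q') :
    PairLt mo so p q' := by
  unfold PairLt Similar at *
  apply so.lt_of_smul_lt_smul (m := lmP mo q)
  rw [Sig.smul_comm (lmP mo q) (lmP mo p), hsim, Sig.smul_comm (lmP mo p),
    Sig.smul_comm (lmP mo q) (lmP mo q')]
  exact so.smul_lt_smul _ _ _ hpq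

lemma PairLt.smul_sig_lt_of_lmP_le (h : PairLt mo so q r) (hle : lmP mo r ≤ lmP mo q) :
    so.lt (Sig.smul (lmP mo r) (sigP so r)) (Sig.smul (lmP mo q) (sigP so q)) :=
  so.lt_of_le_of_lt (so.smul_le_smul_of_le hle _)
    (so.lt_of_lt_of_le h (so.smul_le_smul_of_le hle _))

lemma Similar.trans (hqq' : Similar mo so q q') (hq'r : Similar mo so q' r) :
    Similar mo so q r := by
  unfold Similar at *
  apply Sig.smul_injective (lmP mo q')
  rw [Sig.smul_comm (lmP mo q') (lmP mo q), hq'r, Sig.smul_comm (lmP mo q) (lmP mo r), hqq',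
    Sig.smul_comm (lmP mo r) (lmP mo q')]

lemma Similar.lmP_le_of_sigDvd (hsim : Similar mo so q q')
    (hdvd : SigDvd (sigP so q') (sigP so q)) : lmP mo q' ≤ lmP mo q := by
  have h : lmP mo q + (sigP so q').1 = lmP mo q' + (sigP so q).1 := congrArg Prod.fst hsim
  refine le_of_add_le_add_right (a := (sigP so q).1) ?_
  calc lmP mo q' + (sigP so q).1 = lmP mo q + (sigP so q').1 := h.symm
    _ ≤ lmP mo q + (sigP so q).1 := by gcongr; exact hdvd.2

lemma TopRed.trans (hpq : TopRed mo so p q) (hqr : TopRed mo so q r) : TopRed mo so p r :=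
  ⟨hpq.1, hqr.2.1, hpq.2.2.1.trans hqr.2.2.1, hqr.2.2.2.trans hpq.2.2.2⟩

lemma TopRed.trans_similar (hpq : TopRed mo so p q) (hq' : q'.2 ≠ 0)
    (hsim : Similar mo so q q') (hdvd : SigDvd (sigP so q') (sigP so q)) : TopRed mo so p q' :=
  ⟨hpq.1, hq', hpq.2.2.1.trans_similar hsim, (hsim.lmP_le_of_sigDvd hdvd).trans hpq.2.2.2⟩

variable {f : Fin d → MvPolynomial (Fin n) K}

lemma exists_isTRP_topRed (h : ∃ q, IsPair f q ∧ TopRed mo so p q) :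
    ∃ q, IsTRP f mo so q ∧ TopRed mo so p q := by
  obtain ⟨q, ⟨hq, hpq⟩, hmin⟩ :=
    (InvImage.wf (fun q => Sig.smul (lmP mo q) (sigP so q)) so.wellFounded).has_min
      {q | IsPair f q ∧ TopRed mo so p q} h
  refine ⟨q, ⟨hq, hpq.2.1, fun r hr hqr => hmin r ⟨hr, hpq.trans hqr⟩ ?_⟩, hpq⟩
  exact hqr.2.2.1.smul_sig_lt_of_lmP_le hqr.2.2.2

lemma IsTRP.exists_isTRB_similar_sigDvd (hq : IsTRP f mo so q) :
    ∃ q', IsTRB f mo so q' ∧ Similar mo so q q' ∧ SigDvd (sigP so q') (sigP so q) := by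
  obtain ⟨q', ⟨hq', hsim, hdvd⟩, hmin⟩ := (InvImage.wf (sigP so) so.wellFounded).has_min
    {q' | IsTRP f mo so q' ∧ Similar mo so q q' ∧ SigDvd (sigP so q') (sigP so q)}
    ⟨q, hq, rfl, rfl, le_rfl⟩
  refine ⟨q', ⟨hq', fun r hr hsim' hdvd' => ?_⟩, hsim, hdvd⟩
  by_contra hne
  exact hmin r ⟨hr, hsim.trans hsim', hdvd'.trans hdvd⟩ (so.lt_of_sigDvd_of_ne hdvd' hne)

end Pairs

theorem topRed_by_TRB_general {K : Type*} [Field K] {n d : ℕ} [NeZero d]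
    (mo : MonOrder n) (so : SigOrder n d) (f : Fin d → MvPolynomial (Fin n) K)
    (p : PairT K n d)
    (h : ∃ q : PairT K n d, IsPair f q ∧ TopRed mo so p q) :
    ∃ q : PairT K n d, IsPair f q ∧ IsTRB f mo so q ∧ TopRed mo so p q := by
  obtain ⟨q, hq, hpq⟩ := exists_isTRP_topRed h
  obtain ⟨q', hq', hsim, hdvd⟩ := hq.exists_isTRB_similar_sigDvd
  exact ⟨q', hq'.1.1, hq', hpq.trans_similar hq'.1.2.1 hsim hdvd⟩

/-- Every pair that is top reducible by some pair is top reducible by some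
TRB pair. -/
theorem topRed_by_TRB {K : Type*} [Field K] {n d : ℕ} [NeZero d]
    (mo : MonOrder n) (so : SigOrder n d) (f : Fin d → MvPolynomial (Fin n) K)
    (p : PairT K n d) (hp : IsPair f p)
    (h : ∃ q : PairT K n d, IsPair f q ∧ TopRed mo so p q) :
    ∃ q : PairT K n d, IsPair f q ∧ IsTRB f mo so q ∧ TopRed mo so p q :=
  topRed_by_TRB_general mo so f p h

end TRB
end

section
/- Every TRP pair p is equivalent to a monomial multiple of a TRB pair: there exist a TRB pair p' and a monomial m' such that sig(p) = m'·sig(p') and lm(p) = m'·lm(p'). -/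
namespace TRB

open MvPolynomial
open scoped Classical

variable {K : Type*} [Field K] {n d : ℕ}

/-- Every TRP pair `p` is equivalent to a monomial multiple of a TRB pair:
there exist a TRB pair `p'` and a monomial `m'` such that `sig p = m'·sig p'` and
`lm p = m'·lm p'`. -/
theorem TRP_equiv_mul_TRB {K : Type*} [Field K] {n d : ℕ} [NeZero d]
    (mo : MonOrder n) (so : SigOrder n d) (f : Fin d → MvPolynomial (Fin n) K)
    (p : PairT K n d) (hp : IsTRP f mo so p) :
    ∃ (p' : PairT K n d) (m' : Mon n), IsTRB f mo so p' ∧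
      sigP so p = Sig.smul m' (sigP so p') ∧ lmP mo p = m' + lmP mo p' := by
  classical
  suffices h : ∀ a : Mon n, ∀ p : PairT K n d, IsTRP f mo so p → (sigP so p).1 = a →
      ∃ (p' : PairT K n d) (m' : Mon n), IsTRB f mo so p' ∧
        sigP so p = Sig.smul m' (sigP so p') ∧ lmP mo p = m' + lmP mo p' by
    exact h _ p hp rfl
  intro a
  induction a using WellFoundedLT.induction with
  | ind a IH =>
    intro p hp hpa
    by_cases htrb : IsTRB f mo so p
    · refine ⟨p, 0, htrb, ?_, ?_⟩ <;> simp [Sig.smul]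
    · have : ∃ q : PairT K n d, IsTRP f mo so q ∧ Similar mo so p q ∧
          SigDvd (sigP so q) (sigP so p) ∧ sigP so q ≠ sigP so p := by
        by_contra hcon
        push_neg at hcon
        exact htrb ⟨hp, fun q hq hs hd => hcon q hq hs hd⟩
      obtain ⟨q, hq, hsim, hdvd, hne⟩ := this
      have hidx : (sigP so q).2 = (sigP so p).2 := hdvd.1
      have hle : (sigP so q).1 ≤ (sigP so p).1 := hdvd.2
      have hne1 : (sigP so q).1 ≠ (sigP so p).1 := fun h =>
        hne (Prod.ext h hidx)
      have hlt : (sigP so q).1 < a := hpa ▸ lt_of_le_of_ne hle hne1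
      obtain ⟨p', m'', hp', hsig', hlm'⟩ := IH _ hlt q hq rfl
      set t : Mon n := (sigP so p).1 - (sigP so q).1 with ht
      have htadd : (sigP so q).1 + t = (sigP so p).1 := add_tsub_cancel_of_le hle
      -- similarity gives lm p + sig q = lm q + sig p (first components)
      have hsim1 : lmP mo p + (sigP so q).1 = lmP mo q + (sigP so p).1 := by
        have := congrArg Prod.fst hsim
        simpa [Sig.smul] using this
      have hlm : lmP mo p = lmP mo q + t := by
        have : lmP mo p + (sigP so q).1 = (lmP mo q + t) + (sigP so q).1 := by
          rw [hsim1, ← htadd]; abel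
        exact add_right_cancel this
      have hsigp : sigP so p = Sig.smul t (sigP so q) := by
        refine Prod.ext ?_ ?_
        · simp [Sig.smul, ← htadd, add_comm]
        · exact hidx.symm
      refine ⟨p', t + m'', hp', ?_, ?_⟩
      · rw [hsigp, hsig']
        simp [Sig.smul, add_assoc]
      · rw [hlm, hlm']
        abel


end TRB
end

section
/- The admissible signature order ≺_s is compatible with the admissible monomial order ≺_m if and only if the sub-order ≺_{s,i} coincides with ≺_m for every index i. -/
namespace TRB

open MvPolynomial
open scoped Classical

variable {K : Type*} [Field K] {n d : ℕ}

/-- The admissible signature order `≺_s` is compatible with the admissible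
monomial order `≺_m` if and only if the sub-order `≺_{s,i}` coincides with `≺_m` for
every index `i`. -/
theorem compatible_iff_subOrders_eq {n d : ℕ} (mo : MonOrder n) (so : SigOrder n d) :
    Compatible mo so ↔ ∀ i : Fin d, EqOrders so mo i := by
  constructor
  · intro hc i a b
    constructor
    · intro hab
      rcases mo.total a b with h | h | h
      · exact h
      · subst h; exact absurd hab (so.irrefl _)
      · have hle := (hc ((0 : Mon n), i) ((0 : Mon n), i) b a (Or.inr rfl) (Or.inl h)).1
        have hsb : Sig.smul b ((0 : Mon n), i) = (b, i) := by simp [Sig.smul]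
        have hsa : Sig.smul a ((0 : Mon n), i) = (a, i) := by simp [Sig.smul]
        rw [hsb, hsa] at hle
        rcases hle with hlt | heq
        · exact absurd (so.trans _ _ _ hab hlt) (so.irrefl _)
        · have : b = a := (Prod.ext_iff.mp heq).1
          subst this
          exact absurd hab (so.irrefl _)
    · intro hab
      have h := hc ((0 : Mon n), i) ((0 : Mon n), i) a b (Or.inr rfl) (Or.inl hab)
      rcases h.1 with hlt | heq
      · simpa [Sig.smul, SubOrder] using hlt
      · have := (h.2 heq).2
        subst this
        exact absurd hab (mo.irrefl _)
  · intro he s₁ s₂ m₁ m₂ hs hm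
    have key : ∀ (a b : Mon n) (s : Sig n d), mo.lt a b →
        so.lt (Sig.smul a s) (Sig.smul b s) := by
      intro a b s h
      have h2 : mo.lt (a + s.1) (b + s.1) := by
        have := mo.mul_lt_mul s.1 a b h
        simpa [add_comm] using this
      have := (he s.2 (a + s.1) (b + s.1)).2 h2
      simpa [Sig.smul, SubOrder] using this
    have strict : so.lt (Sig.smul m₁ s₁) (Sig.smul m₂ s₂) ∨ (s₁ = s₂ ∧ m₁ = m₂) := by
      rcases hs with hlt | rfl
      · have h1 := so.smul_lt_smul m₁ s₁ s₂ hlt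
        rcases hm with hmlt | rfl
        · exact Or.inl (so.trans _ _ _ h1 (key m₁ m₂ s₂ hmlt))
        · exact Or.inl h1
      · rcases hm with hmlt | rfl
        · exact Or.inl (key m₁ m₂ s₁ hmlt)
        · exact Or.inr ⟨rfl, rfl⟩
    rcases strict with hlt | ⟨h1, h2⟩
    · exact ⟨Or.inl hlt, fun heq => absurd (heq ▸ hlt) (so.irrefl _)⟩
    · subst h1; subst h2; exact ⟨Or.inr rfl, fun _ => ⟨rfl, rfl⟩⟩

end TRB
end
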